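/- Let y be a fractional cache state and let X be a random integral cache state such that for every i ∈ {1,…,K−1}: E[ ∏_{j ∈ I_i} (1 − X_{π_j}/(k − σ_i)) ] ≤ ∏_{j ∈ I_i} (1 − y_{π_j}/(k − σ_i)). Then the expected caching gain of X satisfies E[ G(X) ] ≥ (1 − 1/e) · G(y). -/

import Mathlib

/-!
For a fractional state `x`, every object `π j > N` counted by `σ_i` is preceded by its
catalog copy `π j - N`, and the two values sum to one; hence
`∑_{j ≤ i} x_{π j} - σ_i = ∑_{j ∈ I_i} x_{π j}` and the `i`-th gain term is
`α_i · min(s, ∑_{j ∈ I_i} x_{π j})` with `s = k - σ_i ≥ 1`. For `z_j ∈ [0, s]` the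
multilinear term `s (1 - ∏ (1 - z_j / s))` lies between `(1 - 1/e) min(s, ∑ z_j)` (from
`1 - w ≤ e^{-w}` and concavity of `1 - e^{-t}`) and `min(s, ∑ z_j)` (Weierstrass' product
inequality). So `(1 - 1/e) G(y) ≤ L(y)`, the product
hypothesis gives `L(y) ≤ E[L(X)]` by linearity, and `L(X) ≤ G(X)` pointwise.
-/

open MeasureTheory

namespace ACAI

/-- `sigma N π i` = number of indices `j ∈ {1,…,i}` with `π j > N`, i.e. the number of
objects among the `i` cheapest that are served from the server. -/
def sigma (N : ℕ) (π : ℕ → ℕ) (i : ℕ) : ℕ :=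
  ((Finset.Icc 1 i).filter (fun j => N < π j)).card

/-- `Kmin N k π` = least index `i` with `sigma N π i = k`. -/
noncomputable def Kmin (N k : ℕ) (π : ℕ → ℕ) : ℕ :=
  sInf {i | sigma N π i = k}

/-- `alpha c π i = c (π (i+1)) - c (π i)`. -/
noncomputable def alpha (c : ℕ → ℝ) (π : ℕ → ℕ) (i : ℕ) : ℝ :=
  c (π (i + 1)) - c (π i)

/-- A fractional cache state: `y ∈ [0,1]^{2N}` with `∑_{i=1}^{N} y i = h` and
`y (i+N) = 1 - y i` for `i ∈ {1,…,N}`. -/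
def IsFrac (N h : ℕ) (y : ℕ → ℝ) : Prop :=
  (∀ i ∈ Finset.Icc 1 (2 * N), y i ∈ Set.Icc (0 : ℝ) 1) ∧
  (∑ i ∈ Finset.Icc 1 N, y i = (h : ℝ)) ∧
  (∀ i ∈ Finset.Icc 1 N, y (i + N) = 1 - y i)

/-- An integral cache state: a fractional cache state with `{0,1}` coordinates. -/
def IsInt (N h : ℕ) (y : ℕ → ℝ) : Prop :=
  IsFrac N h y ∧ ∀ i ∈ Finset.Icc 1 (2 * N), y i = 0 ∨ y i = 1

/-- A request over the augmented catalog `U = {1,…,2N}`: nonnegative costs `c` with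
`c (i+N) = c i + cf` for catalog objects `i ∈ {1,…,N}`, and a bijection `π` of
`{1,…,2N}` sorting the costs nondecreasingly and placing each `i ∈ {1,…,N}` before
`i + N`. -/
def Request (N : ℕ) (cf : ℝ) (c : ℕ → ℝ) (π : ℕ → ℕ) : Prop :=
  (∀ i ∈ Finset.Icc 1 (2 * N), 0 ≤ c i) ∧
  (∀ i ∈ Finset.Icc 1 N, c (i + N) = c i + cf) ∧
  Set.BijOn π (Set.Icc 1 (2 * N)) (Set.Icc 1 (2 * N)) ∧
  (∀ i, 1 ≤ i → i < 2 * N → c (π i) ≤ c (π (i + 1))) ∧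
  (∀ j l, j ∈ Set.Icc 1 (2 * N) → l ∈ Set.Icc 1 (2 * N) →
    π j ≤ N → π l = π j + N → j < l)

/-- The caching gain
`G(y) = ∑_{i=1}^{K-1} α_i · min { k - σ_i, (∑_{j=1}^{i} y_{π j}) - σ_i }`. -/
noncomputable def gain (N k : ℕ) (c : ℕ → ℝ) (π : ℕ → ℕ) (y : ℕ → ℝ) : ℝ :=
  ∑ i ∈ Finset.Icc 1 (Kmin N k π - 1),
    alpha c π i *
      min ((k : ℝ) - sigma N π i) ((∑ j ∈ Finset.Icc 1 i, y (π j)) - sigma N π i)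

/-- `Iset N π i = { j ∈ {1,…,i} : π j ≤ N and π j + N ∉ {π 1, …, π i} }`. -/
def Iset (N : ℕ) (π : ℕ → ℕ) (i : ℕ) : Finset ℕ :=
  (Finset.Icc 1 i).filter (fun j => π j ≤ N ∧ ∀ l ∈ Finset.Icc (1 : ℕ) i, π l ≠ π j + N)

/-- The auxiliary (multilinear) gain
`L(y) = ∑_{i=1}^{K-1} α_i (k - σ_i) (1 - ∏_{j ∈ I_i} (1 - y_{π j}/(k - σ_i)))`. -/
noncomputable def aux (N k : ℕ) (c : ℕ → ℝ) (π : ℕ → ℕ) (y : ℕ → ℝ) : ℝ :=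
  ∑ i ∈ Finset.Icc 1 (Kmin N k π - 1),
    alpha c π i * ((k : ℝ) - sigma N π i) *
      (1 - ∏ j ∈ Iset N π i, (1 - y (π j) / ((k : ℝ) - sigma N π i)))

open Finset

section ProductBounds

variable {ι : Type*} (F : Finset ι)

theorem one_sub_sum_le_prod_one_sub {w : ι → ℝ} (hw : ∀ j ∈ F, w j ∈ Set.Icc (0 : ℝ) 1) :
    1 - ∑ j ∈ F, w j ≤ ∏ j ∈ F, (1 - w j) := by
  classical
  induction F using Finset.induction_on with
  | empty => simp
  | insert a F haF ih =>
    rw [sum_insert haF, prod_insert haF]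
    obtain ⟨hw0, hw1⟩ := hw a (mem_insert_self a F)
    have ih := ih fun j hj => hw j (mem_insert_of_mem hj)
    have hsum : 0 ≤ ∑ j ∈ F, w j := sum_nonneg fun j hj => (hw j (mem_insert_of_mem hj)).1
    nlinarith [mul_le_mul_of_nonneg_left ih (sub_nonneg.2 hw1)]

theorem prod_one_sub_le_exp_neg_sum {w : ι → ℝ} (hw : ∀ j ∈ F, w j ≤ 1) :
    ∏ j ∈ F, (1 - w j) ≤ Real.exp (-∑ j ∈ F, w j) := by
  rw [← sum_neg_distrib, Real.exp_sum]
  exact prod_le_prod (fun j hj => sub_nonneg.2 (hw j hj)) fun j _ => Real.one_sub_le_exp_neg _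

theorem one_sub_inv_exp_mul_le_one_sub_exp_neg {t : ℝ} (ht0 : 0 ≤ t) (ht1 : t ≤ 1) :
    (1 - 1 / Real.exp 1) * t ≤ 1 - Real.exp (-t) := by
  have h := convexOn_exp.2 (Set.mem_univ 0) (Set.mem_univ (-1)) (sub_nonneg.2 ht1) ht0 (by ring)
  simp only [smul_eq_mul, mul_zero, zero_add, mul_neg_one, Real.exp_zero, mul_one,
    Real.exp_neg 1] at h
  rw [one_div]
  linarith

variable {F} {z : ι → ℝ} {s : ℝ}

theorem div_mem_Icc_of_mem_Icc (hs : 0 < s) (hz : ∀ j ∈ F, z j ∈ Set.Icc 0 s) :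
    ∀ j ∈ F, z j / s ∈ Set.Icc (0 : ℝ) 1 := fun j hj =>
  ⟨div_nonneg (hz j hj).1 hs.le, (div_le_one hs).2 (hz j hj).2⟩

theorem prod_one_sub_div_mem_Icc (hs : 0 < s) (hz : ∀ j ∈ F, z j ∈ Set.Icc 0 s) :
    ∏ j ∈ F, (1 - z j / s) ∈ Set.Icc (0 : ℝ) 1 := by
  have hw := div_mem_Icc_of_mem_Icc hs hz
  exact ⟨prod_nonneg fun j hj => sub_nonneg.2 (hw j hj).2,
    prod_le_one (fun j hj => sub_nonneg.2 (hw j hj).2) fun j hj => by linarith [(hw j hj).1]⟩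

theorem mul_one_sub_prod_le_min (hs : 0 < s) (hz : ∀ j ∈ F, z j ∈ Set.Icc 0 s) :
    s * (1 - ∏ j ∈ F, (1 - z j / s)) ≤ min s (∑ j ∈ F, z j) := by
  have hP := prod_one_sub_div_mem_Icc hs hz
  have hW := one_sub_sum_le_prod_one_sub F (div_mem_Icc_of_mem_Icc hs hz)
  rw [← sum_div] at hW
  refine le_min (mul_le_of_le_one_right hs.le (by linarith [hP.1])) ?_
  calc s * (1 - ∏ j ∈ F, (1 - z j / s)) ≤ s * ((∑ j ∈ F, z j) / s) := by gcongr; linarith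
    _ = ∑ j ∈ F, z j := mul_div_cancel₀ _ hs.ne'

theorem one_sub_inv_exp_mul_min_le_mul_one_sub_prod (hs : 0 < s)
    (hz : ∀ j ∈ F, z j ∈ Set.Icc 0 s) :
    (1 - 1 / Real.exp 1) * min s (∑ j ∈ F, z j) ≤ s * (1 - ∏ j ∈ F, (1 - z j / s)) := by
  set t := min s (∑ j ∈ F, z j) / s with ht
  have ht0 : 0 ≤ t := div_nonneg (le_min hs.le (sum_nonneg fun j hj => (hz j hj).1)) hs.le
  have ht1 : t ≤ 1 := (div_le_one hs).2 (min_le_left _ _)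
  have hprod : ∏ j ∈ F, (1 - z j / s) ≤ Real.exp (-t) := by
    refine (prod_one_sub_le_exp_neg_sum F fun j hj =>
      (div_mem_Icc_of_mem_Icc hs hz j hj).2).trans ?_
    rw [Real.exp_le_exp, neg_le_neg_iff, ← sum_div]
    exact div_le_div_of_nonneg_right (min_le_right _ _) hs.le
  calc (1 - 1 / Real.exp 1) * min s (∑ j ∈ F, z j) = s * ((1 - 1 / Real.exp 1) * t) := by
        rw [ht, mul_div_assoc', mul_div_cancel₀ _ hs.ne']
    _ ≤ s * (1 - Real.exp (-t)) := by gcongr; exact one_sub_inv_exp_mul_le_one_sub_exp_neg ht0 ht1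
    _ ≤ s * (1 - ∏ j ∈ F, (1 - z j / s)) := by gcongr

end ProductBounds


theorem sum_eq_card_filter_lt_add_sum_unpaired {N : ℕ} {V : Finset ℕ} {x : ℕ → ℝ}
    (hV : V ⊆ Icc 1 (2 * N)) (hpair : ∀ u ∈ V, N < u → u - N ∈ V ∧ x u = 1 - x (u - N)) :
    ∑ u ∈ V, x u = #{u ∈ V | N < u} + ∑ u ∈ V with u ≤ N ∧ u + N ∉ V, x u := by
  set P := {u ∈ V | u ≤ N ∧ u + N ∈ V}
  have hhigh : {u ∈ V | N < u} = P.image (· + N) := by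
    ext u
    simp only [P, mem_filter, mem_image]
    constructor
    · rintro ⟨huV, hNu⟩
      have := mem_Icc.1 (hV huV)
      exact ⟨u - N, ⟨(hpair u huV hNu).1, by omega, by rwa [Nat.sub_add_cancel hNu.le]⟩,
        Nat.sub_add_cancel hNu.le⟩
    · rintro ⟨v, ⟨hvV, -, hvNV⟩, rfl⟩
      have := mem_Icc.1 (hV hvV)
      exact ⟨hvNV, by omega⟩
  have hlow : ∑ u ∈ V with ¬N < u, x u = ∑ u ∈ P, x u + ∑ u ∈ V with u ≤ N ∧ u + N ∉ V, x u := by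
    rw [← sum_filter_add_sum_filter_not {u ∈ V | ¬N < u} (· + N ∈ V), filter_filter,
      filter_filter]
    simp only [not_lt, P]
  have hpaired : ∑ u ∈ P, x (u + N) = #P - ∑ u ∈ P, x u := by
    calc ∑ u ∈ P, x (u + N) = ∑ u ∈ P, (1 - x u) := sum_congr rfl fun u hu => by
          obtain ⟨huV, -, huNV⟩ := mem_filter.1 hu
          have := mem_Icc.1 (hV huV)
          simpa using (hpair (u + N) huNV (by omega)).2
      _ = #P - ∑ u ∈ P, x u := by rw [sum_sub_distrib, sum_const, nsmul_one]
  rw [← sum_filter_add_sum_filter_not V (N < ·), hlow, hhigh,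
    sum_image fun a _ b _ hab => add_right_cancel hab,
    card_image_of_injective _ (add_left_injective N), hpaired]
  ring

theorem sigma_mono (N : ℕ) (π : ℕ → ℕ) : Monotone (sigma N π) := fun _ _ hab =>
  card_le_card (filter_subset_filter _ (Icc_subset_Icc le_rfl hab))

section Request

variable {N : ℕ} {π : ℕ → ℕ}

theorem sigma_lt_of_lt_Kmin {k i : ℕ} (hi : i < Kmin N k π) : sigma N π i < k := by
  have hne : {j | sigma N π j = k}.Nonempty := Nat.nonempty_of_pos_sInf (pos_of_gt hi)
  have hK : sigma N π (Kmin N k π) = k := Nat.sInf_mem hne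
  exact lt_of_le_of_ne (hK ▸ sigma_mono N π hi.le)
    (Nat.notMem_of_lt_sInf (s := {j | sigma N π j = k}) hi)

theorem sigma_two_mul (hbij : Set.BijOn π (Set.Icc 1 (2 * N)) (Set.Icc 1 (2 * N))) :
    sigma N π (2 * N) = N := by
  have himage : (Icc 1 (2 * N)).image π = Icc 1 (2 * N) :=
    coe_injective (by push_cast; exact hbij.image_eq)
  have hhigh : {u ∈ Icc 1 (2 * N) | N < u} = Icc (N + 1) (2 * N) := by
    ext u; simp only [mem_filter, mem_Icc]; omega
  have hinj : Set.InjOn π ({j ∈ Icc 1 (2 * N) | N < π j} : Finset ℕ) :=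
    hbij.injOn.mono fun j hj => by
      simp only [coe_filter, mem_Icc, Set.mem_ofPred_eq] at hj; exact hj.1
  rw [sigma, ← card_image_of_injOn hinj, ← filter_image, himage, hhigh, Nat.card_Icc]
  omega

theorem lt_two_mul_of_sigma_lt (hbij : Set.BijOn π (Set.Icc 1 (2 * N)) (Set.Icc 1 (2 * N)))
    {k i : ℕ} (hkN : k ≤ N) (hi : sigma N π i < k) : i < 2 * N := by
  by_contra! h
  have := sigma_mono N π h
  rw [sigma_two_mul hbij] at this
  omega

theorem sub_mem_image_Icc (hbij : Set.BijOn π (Set.Icc 1 (2 * N)) (Set.Icc 1 (2 * N)))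
    (horder : ∀ j l, j ∈ Set.Icc 1 (2 * N) → l ∈ Set.Icc 1 (2 * N) →
      π j ≤ N → π l = π j + N → j < l)
    {i u : ℕ} (hi : i ≤ 2 * N) (hu : u ∈ (Icc 1 i).image π) (hNu : N < u) :
    u - N ∈ (Icc 1 i).image π := by
  obtain ⟨l, hl, rfl⟩ := mem_image.1 hu
  rw [mem_Icc] at hl
  have hl' : l ∈ Set.Icc 1 (2 * N) := ⟨hl.1, hl.2.trans hi⟩
  have hπl := hbij.mapsTo hl'
  rw [Set.mem_Icc] at hπl
  obtain ⟨j, hj, hπj⟩ := hbij.surjOn (show π l - N ∈ Set.Icc 1 (2 * N) by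
    rw [Set.mem_Icc]; omega)
  have hjl : j < l := horder j l hj hl' (by omega) (by omega)
  exact mem_image.2 ⟨j, mem_Icc.2 ⟨hj.1, by omega⟩, hπj⟩

theorem sum_sub_sigma_eq_sum_Iset (hbij : Set.BijOn π (Set.Icc 1 (2 * N)) (Set.Icc 1 (2 * N)))
    (horder : ∀ j l, j ∈ Set.Icc 1 (2 * N) → l ∈ Set.Icc 1 (2 * N) →
      π j ≤ N → π l = π j + N → j < l)
    {h i : ℕ} {x : ℕ → ℝ} (hx : IsFrac N h x) (hi : i ≤ 2 * N) :
    (∑ j ∈ Icc 1 i, x (π j)) - sigma N π i = ∑ j ∈ Iset N π i, x (π j) := by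
  set V := (Icc 1 i).image π
  have hinj : Set.InjOn π (Icc 1 i) :=
    hbij.injOn.mono fun j hj => by rw [coe_Icc] at hj; exact ⟨hj.1, hj.2.trans hi⟩
  have hV : V ⊆ Icc 1 (2 * N) := image_subset_iff.2 fun j hj => by
    rw [mem_Icc] at hj ⊢; exact hbij.mapsTo ⟨hj.1, hj.2.trans hi⟩
  have hpair : ∀ u ∈ V, N < u → u - N ∈ V ∧ x u = 1 - x (u - N) := fun u hu hNu => by
    refine ⟨sub_mem_image_Icc hbij horder hi hu hNu, ?_⟩
    have := mem_Icc.1 (hV hu)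
    have hcopy := hx.2.2 (u - N) (mem_Icc.2 ⟨by omega, by omega⟩)
    rwa [Nat.sub_add_cancel hNu.le] at hcopy
  have hsigma : sigma N π i = #{u ∈ V | N < u} := by
    rw [sigma, filter_image, card_image_of_injOn (hinj.mono (filter_subset _ _))]
  have hIset : ∑ j ∈ Iset N π i, x (π j) = ∑ u ∈ V with u ≤ N ∧ u + N ∉ V, x u := by
    rw [filter_image, sum_image (hinj.mono (filter_subset _ _))]
    exact sum_congr (filter_congr fun j _ => by simp [V]) fun _ _ => rfl
  rw [← sum_image hinj, sum_eq_card_filter_lt_add_sum_unpaired hV hpair, hsigma, hIset]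
  ring

end Request

section Gain

variable {N k h : ℕ} {cf : ℝ} {c : ℕ → ℝ} {π : ℕ → ℕ} {i : ℕ}

theorem one_le_sub_sigma (hi : i ∈ Icc 1 (Kmin N k π - 1)) : (1 : ℝ) ≤ k - sigma N π i := by
  have := sigma_lt_of_lt_Kmin (show i < Kmin N k π by rw [mem_Icc] at hi; omega)
  rw [le_sub_iff_add_le']
  exact_mod_cast this

theorem lt_two_mul_of_mem_Icc_Kmin (hbij : Set.BijOn π (Set.Icc 1 (2 * N)) (Set.Icc 1 (2 * N)))
    (hkN : k ≤ N) (hi : i ∈ Icc 1 (Kmin N k π - 1)) : i < 2 * N :=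
  lt_two_mul_of_sigma_lt hbij hkN (sigma_lt_of_lt_Kmin (by rw [mem_Icc] at hi; omega))

theorem alpha_nonneg_of_mem_Icc_Kmin (hreq : Request N cf c π) (hkN : k ≤ N)
    (hi : i ∈ Icc 1 (Kmin N k π - 1)) : 0 ≤ alpha c π i :=
  sub_nonneg.2 (hreq.2.2.2.1 i (mem_Icc.1 hi).1 (lt_two_mul_of_mem_Icc_Kmin hreq.2.2.1 hkN hi))

theorem apply_mem_Icc_sub_sigma (hbij : Set.BijOn π (Set.Icc 1 (2 * N)) (Set.Icc 1 (2 * N)))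
    (hkN : k ≤ N) {x : ℕ → ℝ} (hx : IsFrac N h x) (hi : i ∈ Icc 1 (Kmin N k π - 1)) :
    ∀ j ∈ Iset N π i, x (π j) ∈ Set.Icc 0 ((k : ℝ) - sigma N π i) := fun j hj => by
  have hj := mem_Icc.1 (mem_filter.1 hj).1
  have hπj := hbij.mapsTo ⟨hj.1, hj.2.trans (lt_two_mul_of_mem_Icc_Kmin hbij hkN hi).le⟩
  obtain ⟨h0, h1⟩ := hx.1 (π j) (mem_Icc.2 hπj)
  exact ⟨h0, h1.trans (one_le_sub_sigma hi)⟩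

theorem gain_eq_sum_min_sum_Iset (hreq : Request N cf c π) (hkN : k ≤ N) {x : ℕ → ℝ}
    (hx : IsFrac N h x) :
    gain N k c π x = ∑ i ∈ Icc 1 (Kmin N k π - 1),
      alpha c π i * min ((k : ℝ) - sigma N π i) (∑ j ∈ Iset N π i, x (π j)) :=
  sum_congr rfl fun i hi => by
    rw [sum_sub_sigma_eq_sum_Iset hreq.2.2.1 hreq.2.2.2.2 hx
      (lt_two_mul_of_mem_Icc_Kmin hreq.2.2.1 hkN hi).le]

theorem one_sub_inv_exp_mul_gain_le_aux (hreq : Request N cf c π) (hkN : k ≤ N) {x : ℕ → ℝ}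
    (hx : IsFrac N h x) : (1 - 1 / Real.exp 1) * gain N k c π x ≤ aux N k c π x := by
  rw [gain_eq_sum_min_sum_Iset hreq hkN hx, mul_sum]
  refine sum_le_sum fun i hi => ?_
  rw [mul_left_comm, mul_assoc]
  exact mul_le_mul_of_nonneg_left
    (one_sub_inv_exp_mul_min_le_mul_one_sub_prod (by linarith [one_le_sub_sigma hi])
      (apply_mem_Icc_sub_sigma hreq.2.2.1 hkN hx hi))
    (alpha_nonneg_of_mem_Icc_Kmin hreq hkN hi)

theorem aux_le_gain (hreq : Request N cf c π) (hkN : k ≤ N) {x : ℕ → ℝ} (hx : IsFrac N h x) :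
    aux N k c π x ≤ gain N k c π x := by
  rw [gain_eq_sum_min_sum_Iset hreq hkN hx]
  refine sum_le_sum fun i hi => ?_
  rw [mul_assoc]
  exact mul_le_mul_of_nonneg_left
    (mul_one_sub_prod_le_min (by linarith [one_le_sub_sigma hi])
      (apply_mem_Icc_sub_sigma hreq.2.2.1 hkN hx hi))
    (alpha_nonneg_of_mem_Icc_Kmin hreq hkN hi)

variable {Ω : Type*} [MeasurableSpace Ω] (μ : Measure Ω) {X : Ω → ℕ → ℝ}

theorem integrable_prod_Iset [IsFiniteMeasure μ]
    (hbij : Set.BijOn π (Set.Icc 1 (2 * N)) (Set.Icc 1 (2 * N))) (hkN : k ≤ N)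
    (hXmeas : ∀ i, Measurable fun ω => X ω i) (hXfrac : ∀ ω, IsFrac N h (X ω))
    (hi : i ∈ Icc 1 (Kmin N k π - 1)) :
    Integrable (fun ω => ∏ j ∈ Iset N π i, (1 - X ω (π j) / ((k : ℝ) - sigma N π i))) μ :=
  Integrable.of_mem_Icc 0 1 (by fun_prop) (ae_of_all _ fun ω => prod_one_sub_div_mem_Icc
    (by linarith [one_le_sub_sigma hi]) (apply_mem_Icc_sub_sigma hbij hkN (hXfrac ω) hi))

theorem integrable_aux_term [IsFiniteMeasure μ]
    (hbij : Set.BijOn π (Set.Icc 1 (2 * N)) (Set.Icc 1 (2 * N))) (hkN : k ≤ N)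
    (hXmeas : ∀ i, Measurable fun ω => X ω i) (hXfrac : ∀ ω, IsFrac N h (X ω))
    (hi : i ∈ Icc 1 (Kmin N k π - 1)) :
    Integrable (fun ω => alpha c π i * ((k : ℝ) - sigma N π i) *
      (1 - ∏ j ∈ Iset N π i, (1 - X ω (π j) / ((k : ℝ) - sigma N π i)))) μ :=
  ((integrable_const 1).sub (integrable_prod_Iset μ hbij hkN hXmeas hXfrac hi)).const_mul _

theorem aux_le_integral_aux [IsProbabilityMeasure μ] (hreq : Request N cf c π) (hkN : k ≤ N)
    (hXmeas : ∀ i, Measurable fun ω => X ω i) (hXfrac : ∀ ω, IsFrac N h (X ω)) {y : ℕ → ℝ}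
    (hprod : ∀ i ∈ Icc 1 (Kmin N k π - 1),
      (∫ ω, ∏ j ∈ Iset N π i, (1 - X ω (π j) / ((k : ℝ) - sigma N π i)) ∂μ)
        ≤ ∏ j ∈ Iset N π i, (1 - y (π j) / ((k : ℝ) - sigma N π i))) :
    aux N k c π y ≤ ∫ ω, aux N k c π (X ω) ∂μ := by
  unfold aux
  rw [integral_finsetSum _ fun i hi => integrable_aux_term μ hreq.2.2.1 hkN hXmeas hXfrac hi]
  refine sum_le_sum fun i hi => ?_
  rw [integral_const_mul, integral_sub (integrable_const 1)
    (integrable_prod_Iset μ hreq.2.2.1 hkN hXmeas hXfrac hi), integral_const, probReal_univ,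
    one_smul]
  have := one_le_sub_sigma hi
  have := alpha_nonneg_of_mem_Icc_Kmin hreq hkN hi
  gcongr
  exact hprod i hi

theorem integrable_aux [IsFiniteMeasure μ]
    (hbij : Set.BijOn π (Set.Icc 1 (2 * N)) (Set.Icc 1 (2 * N))) (hkN : k ≤ N)
    (hXmeas : ∀ i, Measurable fun ω => X ω i) (hXfrac : ∀ ω, IsFrac N h (X ω)) :
    Integrable (fun ω => aux N k c π (X ω)) μ :=
  integrable_finsetSum _ fun _ hi => integrable_aux_term μ hbij hkN hXmeas hXfrac hi

theorem integrable_gain [IsFiniteMeasure μ] (hreq : Request N cf c π) (hkN : k ≤ N)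
    (hXmeas : ∀ i, Measurable fun ω => X ω i) (hXfrac : ∀ ω, IsFrac N h (X ω)) :
    Integrable (fun ω => gain N k c π (X ω)) μ := by
  simp_rw [gain_eq_sum_min_sum_Iset hreq hkN (hXfrac _)]
  refine integrable_finsetSum _ fun i hi => Integrable.const_mul ?_ _
  refine Integrable.of_mem_Icc 0 ((k : ℝ) - sigma N π i) (by fun_prop) (ae_of_all _ fun ω => ?_)
  have hX := apply_mem_Icc_sub_sigma hreq.2.2.1 hkN (hXfrac ω) hi
  exact ⟨le_min (by linarith [one_le_sub_sigma hi]) (sum_nonneg fun j hj => (hX j hj).1),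
    min_le_left _ _⟩

end Gain

theorem expected_gain_ge_general
    {Ω : Type*} [MeasurableSpace Ω] (μ : Measure Ω) [IsProbabilityMeasure μ]
    (N k h : ℕ) (hkh : k ≤ h) (hhN : h ≤ N)
    (cf : ℝ) (c : ℕ → ℝ) (π : ℕ → ℕ)
    (hreq : Request N cf c π)
    (y : ℕ → ℝ) (hy : IsFrac N h y)
    (X : Ω → ℕ → ℝ)
    (hXmeas : ∀ i, Measurable fun ω => X ω i)
    (hXint : ∀ ω, IsInt N h (X ω))
    (hprod : ∀ i ∈ Finset.Icc 1 (Kmin N k π - 1),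
      (∫ ω, ∏ j ∈ Iset N π i, (1 - X ω (π j) / ((k : ℝ) - sigma N π i)) ∂μ)
        ≤ ∏ j ∈ Iset N π i, (1 - y (π j) / ((k : ℝ) - sigma N π i))) :
    (1 - 1 / Real.exp 1) * gain N k c π y ≤ ∫ ω, gain N k c π (X ω) ∂μ := by
  have hkN : k ≤ N := hkh.trans hhN
  have hXfrac : ∀ ω, IsFrac N h (X ω) := fun ω => (hXint ω).1
  calc (1 - 1 / Real.exp 1) * gain N k c π y ≤ aux N k c π y :=
        one_sub_inv_exp_mul_gain_le_aux hreq hkN hy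
    _ ≤ ∫ ω, aux N k c π (X ω) ∂μ := aux_le_integral_aux μ hreq hkN hXmeas hXfrac hprod
    _ ≤ ∫ ω, gain N k c π (X ω) ∂μ :=
        integral_mono (integrable_aux μ hreq.2.2.1 hkN hXmeas hXfrac)
          (integrable_gain μ hreq hkN hXmeas hXfrac) fun ω => aux_le_gain hreq hkN (hXfrac ω)

/-- **Expected gain of rounded states (rounding is a `(1-1/e)`-approximation).**
If `X` is a random integral cache state satisfying, for each `i ∈ {1,…,K-1}`,
`E[∏_{j ∈ I_i} (1 - X_{π j}/(k - σ_i))] ≤ ∏_{j ∈ I_i} (1 - y_{π j}/(k - σ_i))`,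
then `E[G(X)] ≥ (1 - 1/e) · G(y)`. -/
theorem expected_gain_ge
    {Ω : Type*} [MeasurableSpace Ω] (μ : Measure Ω) [IsProbabilityMeasure μ]
    (N k h : ℕ) (hN : 0 < N) (hk : 0 < k) (hkh : k ≤ h) (hhN : h ≤ N)
    (cf : ℝ) (hcf : 0 < cf) (c : ℕ → ℝ) (π : ℕ → ℕ)
    (hreq : Request N cf c π)
    (y : ℕ → ℝ) (hy : IsFrac N h y)
    (X : Ω → ℕ → ℝ)
    (hXmeas : ∀ i, Measurable fun ω => X ω i)
    (hXint : ∀ ω, IsInt N h (X ω))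
    (hprod : ∀ i ∈ Finset.Icc 1 (Kmin N k π - 1),
      (∫ ω, ∏ j ∈ Iset N π i, (1 - X ω (π j) / ((k : ℝ) - sigma N π i)) ∂μ)
        ≤ ∏ j ∈ Iset N π i, (1 - y (π j) / ((k : ℝ) - sigma N π i))) :
    (1 - 1 / Real.exp 1) * gain N k c π y ≤ ∫ ω, gain N k c π (X ω) ∂μ :=
  expected_gain_ge_general μ N k h hkh hhN cf c π hreq y hy X hXmeas hXint hprod

end ACAI
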